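/- Let n > k ≥ 1 be coprime integers, let [μ₁, …, μ_t] be the continued fraction expansion of n/k, let S_t be the Smith word built from the quotients [μ₁−1, μ₂, …, μ_t], and let w be the mechanical word of slope k/n. Then S_t is a cyclic rotation of the period word of w: there exists a natural number r such that for every j with 0 ≤ j ≤ n−1, the ((j + r) mod n)-th letter of S_t equals w(j). -/

import Mathlib

/-- Value of a (finite) continued fraction with the given list of quotients:
`cfVal [μ₁, …, μ_t] = μ₁ + 1/(μ₂ + 1/(⋯ + 1/μ_t))`. -/
def cfVal : List ℕ → ℚ
  | [] => 0
  | a :: l => (a : ℚ) + (cfVal l)⁻¹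

/-- The Smith word built from the quotients `[μ₁ - 1, μ₂, …, μ_t]`, where
`[μ₁, …, μ_t]` is the input list: `S₁ = 0^(μ₁-1) ++ [1]`, `S₂ = S₁^μ₂ ++ [0]`,
and `S_j = S_{j-1}^(μ_j) ++ S_{j-2}` for `j ≥ 3` (letters `1 = A`, `0 = B`). -/
def smithWord : List ℕ → List ℤ
  | [] => []
  | μ₁ :: rest =>
    (rest.foldl (fun (p : List ℤ × List ℤ) (μ : ℕ) =>
        (p.2, (List.replicate μ p.2).flatten ++ p.1))
      (([0] : List ℤ), List.replicate (μ₁ - 1) (0 : ℤ) ++ [1])).2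

/-- The mechanical word of slope `α`: `w m = ⌈α (m+1)⌉ - ⌈α m⌉`. -/
noncomputable def mechanicalWord (α : ℝ) (m : ℕ) : ℤ :=
  ⌈α * (m + 1)⌉ - ⌈α * m⌉

/-!
Write `floorLine k n c x = ⌊(k x + c) / n⌋` and call the word of its increments over
`x = 0, …, n - 1` the phase word of slope `k / n` and phase `c`. The mechanical word of slope
`k / n` is the phase word of phase `n - 1`, and since `k` is invertible modulo `n`, changing the
phase only rotates a phase word. So it suffices to show that the Smith word is a phase word of
slope `k / n`.

Starting from `S₋₁ = [1]` (slope `1/1`) and `S₀ = [0]` (slope `0/1`), every pair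
`(S_{j-1}, S_j)` consists of phase words of slopes `k'/n'` and `k/n` with `k n' - k' n = ±1`,
the phases being fixed by that sign. In `S_{j+1} = S_j^μ S_{j-1}`, of slope
`(μ k + k') / (μ n + n')`, the line of the new slope stays, over each copy of `S_j` and over
the final `S_{j-1}`, in the same unit strips as the line of the shorter word: an integer
separating the two lines is ruled out by cross-multiplying against the determinant `±1`.
Finally `n / k = [μ₁, …, μ_t]` with `gcd (n, k) = 1` identifies the slope of `S_t` with
`k / n`.
-/

def diffWord (F : ℕ → ℤ) (len : ℕ) : List ℤ :=
  (List.range len).map fun i => F (i + 1) - F i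

section diffWord

variable {F G : ℕ → ℤ}

theorem getElem?_diffWord {len i : ℕ} (hi : i < len) :
    (diffWord F len)[i]? = some (F (i + 1) - F i) := by
  simp [diffWord, hi]

theorem diffWord_add (l₁ l₂ : ℕ) :
    diffWord F (l₁ + l₂) = diffWord F l₁ ++ diffWord (fun x => F (l₁ + x)) l₂ := by
  simp [diffWord, List.range_add, Function.comp_def, add_assoc]

theorem diffWord_congr {len : ℕ} {d : ℤ} (h : ∀ y ≤ len, F y = G y + d) :
    diffWord F len = diffWord G len :=
  List.map_congr_left fun i hi => by
    rw [List.mem_range] at hi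
    rw [h i hi.le, h (i + 1) hi]
    ring

theorem diffWord_mul_add {f g : ℕ → ℤ} {μ n n' : ℕ} {d : ℕ → ℤ} {e : ℤ}
    (hcopy : ∀ m < μ, ∀ y ≤ n, F (m * n + y) = f y + d m)
    (htail : ∀ y ≤ n', F (μ * n + y) = g y + e) :
    diffWord F (μ * n + n') = (List.replicate μ (diffWord f n)).flatten ++ diffWord g n' := by
  rw [diffWord_add, diffWord_congr htail]
  congr 1
  clear htail
  induction μ with
  | zero => simp [diffWord]
  | succ μ ih =>
    rw [Nat.succ_mul, diffWord_add, ih fun m hm => hcopy m (by omega),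
      diffWord_congr (hcopy μ (by omega)), List.replicate_succ', List.flatten_append,
      List.flatten_singleton]

end diffWord

def floorLine (k n : ℕ) (c : ℤ) (x : ℕ) : ℤ :=
  (k * x + c) / n

def phaseWord (k n : ℕ) (c : ℤ) : List ℤ :=
  diffWord (floorLine k n c) n

section floorLine

variable {k n : ℕ}

theorem floorLine_add (c : ℤ) (x r : ℕ) :
    floorLine k n c (x + r) = floorLine k n (c + k * r) x := by
  unfold floorLine
  push_cast
  ring_nf

theorem floorLine_add_mul (hn : n ≠ 0) (c : ℤ) (x q : ℕ) :
    floorLine k n c (x + n * q) = floorLine k n c x + k * q := by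
  unfold floorLine
  push_cast
  rw [← Int.add_mul_ediv_right _ _ (by exact_mod_cast hn)]
  ring_nf

theorem floorLine_add_mul_phase (hn : n ≠ 0) (c t : ℤ) (x : ℕ) :
    floorLine k n (c + n * t) x = floorLine k n c x + t := by
  unfold floorLine
  rw [← Int.add_mul_ediv_right _ _ (by exact_mod_cast hn)]
  ring_nf

theorem Int.ceil_intCast_div_natCast_eq_ediv (a : ℤ) (hn : 0 < n) :
    ⌈(a : ℝ) / n⌉ = (a + (n - 1)) / n := by
  refine eq_of_forall_ge_iff fun p => ?_
  rw [Int.ceil_le, div_le_iff₀ (by positivity), ← Int.lt_add_one_iff,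
    Int.ediv_lt_iff_lt_mul (by positivity)]
  constructor <;> intro h
  · have : a ≤ p * n := by exact_mod_cast h
    linarith
  · have : a ≤ p * n := by linarith
    exact_mod_cast this

theorem mechanicalWord_natCast_div (hn : 0 < n) (j : ℕ) :
    mechanicalWord ((k : ℝ) / n) j =
      floorLine k n (n - 1) (j + 1) - floorLine k n (n - 1) j := by
  have hceil (x : ℕ) : ⌈(k : ℝ) / n * x⌉ = floorLine k n (n - 1) x := by
    rw [floorLine, ← Int.ceil_intCast_div_natCast_eq_ediv _ hn]
    push_cast
    ring_nf
  simpa [mechanicalWord] using congrArg₂ (· - ·) (hceil (j + 1)) (hceil j)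

theorem exists_add_mul_eq_add_mul_of_coprime (hn : 0 < n) (hkn : Nat.Coprime k n) (c d : ℤ) :
    ∃ (r : ℕ) (t : ℤ), c + k * r = d + n * t := by
  obtain ⟨y, hy⟩ := Int.mod_coprime hkn
  have hr : 0 ≤ (d - c) * y % n := Int.emod_nonneg _ (by omega)
  have hmod : c + k * ((d - c) * y % n) ≡ d [ZMOD n] :=
    calc c + k * ((d - c) * y % n) ≡ c + k * ((d - c) * y) [ZMOD n] :=
          ((Int.mod_modEq _ _).mul_left _).add_left _
      _ = c + (d - c) * (k * y) := by ring
      _ ≡ c + (d - c) * 1 [ZMOD n] := (hy.mul_left _).add_left _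
      _ = d := by ring
  obtain ⟨t, ht⟩ := hmod.symm.dvd
  exact ⟨((d - c) * y % n).toNat, t, by rw [Int.toNat_of_nonneg hr]; linarith⟩

theorem phaseWord_rotate (hn : 0 < n) (hkn : Nat.Coprime k n) (c d : ℤ) :
    ∃ r : ℕ, ∀ j < n,
      (phaseWord k n c)[(j + r) % n]? = some (floorLine k n d (j + 1) - floorLine k n d j) := by
  obtain ⟨r, t, hrt⟩ := exists_add_mul_eq_add_mul_of_coprime hn hkn c d
  refine ⟨r, fun j _ => ?_⟩
  have hshift (x : ℕ) : floorLine k n c ((j + r) % n + x) + k * ((j + r) / n : ℕ) =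
      floorLine k n d (j + x) + t := by
    rw [← floorLine_add_mul hn.ne', show (j + r) % n + x + n * ((j + r) / n) = j + x + r by
      have := Nat.mod_add_div (j + r) n; omega, floorLine_add, hrt,
      floorLine_add_mul_phase hn.ne']
  rw [phaseWord, getElem?_diffWord (Nat.mod_lt _ hn)]
  have h₀ := hshift 0
  have h₁ := hshift 1
  simp only [add_zero] at h₀
  congr 1
  linarith

end floorLine

theorem Int.ediv_eq_ediv_of_forall_mul_le_iff {a b N n : ℤ} (hN : 0 < N) (hn : 0 < n)
    (h : ∀ p : ℤ, p * N ≤ a ↔ p * n ≤ b) : a / N = b / n :=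
  eq_of_forall_le_iff fun p => by rw [Int.le_ediv_iff_mul_le hN, Int.le_ediv_iff_mul_le hn, h]

section mediant

/-! In each case an integer `p` lying between the two lines is refuted by adding the two
inequalities multiplied by the positive denominators and using the determinant identity; in the
tail cases `p` is first compared with the line of slope `k / n`. -/

variable {k k' n n' μ : ℕ}

theorem floorLine_mediant_copy_of_det_pos (hn : 0 < n) (hn' : 0 < n')
    (hdet : k * n' = k' * n + 1) {m y : ℕ} (hm : m < μ) (hy : y ≤ n) :
    floorLine (μ * k + k') (μ * n + n') (μ * k + k' : ℕ) (m * n + y) =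
      floorLine k n (k - 1) y + m * k := by
  have hdet : (k * n' * (m * n + y + 1) : ℤ) = (k' * n + 1) * (m * n + y + 1) := by
    exact_mod_cast congrArg (· * (m * n + y + 1)) hdet
  unfold floorLine
  push_cast
  rw [← Int.add_mul_ediv_right _ _ (by positivity)]
  refine Int.ediv_eq_ediv_of_forall_mul_le_iff (by positivity) (by positivity) fun p =>
    ⟨fun h => ?_, fun h => ?_⟩ <;> by_contra! h'
  · nlinarith [mul_le_mul_of_nonneg_left h (by positivity : (0 : ℤ) ≤ n),
      mul_le_mul_of_nonneg_left h' (by positivity : (0 : ℤ) ≤ μ * n + n')]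
  · nlinarith [mul_le_mul_of_nonneg_left h (by positivity : (0 : ℤ) ≤ μ * n + n'),
      mul_le_mul_of_nonneg_left h' (by positivity : (0 : ℤ) ≤ n)]

theorem floorLine_mediant_tail_of_det_pos (hn : 0 < n) (hn' : 0 < n')
    (hdet : k * n' = k' * n + 1) {y : ℕ} (hy : y ≤ n') :
    floorLine (μ * k + k') (μ * n + n') (μ * k + k' : ℕ) (μ * n + y) =
      floorLine k' n' k' y + μ * k := by
  have hdet : (k * n' : ℤ) = k' * n + 1 := by exact_mod_cast hdet
  unfold floorLine
  push_cast
  rw [← Int.add_mul_ediv_right _ _ (by positivity)]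
  refine Int.ediv_eq_ediv_of_forall_mul_le_iff (by positivity) (by positivity) fun p =>
    ⟨fun h => ?_, fun h => ?_⟩ <;> by_contra! h'
  · have : p * n ≤ k * (y + 1) - 2 + μ * k * n := by nlinarith
    nlinarith [mul_le_mul_of_nonneg_left this (by positivity : (0 : ℤ) ≤ n'),
      mul_le_mul_of_nonneg_left h' (by positivity : (0 : ℤ) ≤ n)]
  · have : k * (y + 1) + μ * k * n ≤ p * n := by nlinarith
    nlinarith [mul_le_mul_of_nonneg_left this (by positivity : (0 : ℤ) ≤ n'),
      mul_le_mul_of_nonneg_left h (by positivity : (0 : ℤ) ≤ n)]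

theorem floorLine_mediant_copy_of_det_neg (hn : 0 < n) (hn' : 0 < n')
    (hdet : k' * n = k * n' + 1) {m y : ℕ} (hm : m < μ) (hy : y ≤ n) :
    floorLine (μ * k + k') (μ * n + n') ((μ * k + k' : ℕ) - 1) (m * n + y) =
      floorLine k n k y + m * k := by
  have hdet : (k' * n * (m * n + y + 1) : ℤ) = (k * n' + 1) * (m * n + y + 1) := by
    exact_mod_cast congrArg (· * (m * n + y + 1)) hdet
  unfold floorLine
  push_cast
  rw [← Int.add_mul_ediv_right _ _ (by positivity)]
  refine Int.ediv_eq_ediv_of_forall_mul_le_iff (by positivity) (by positivity) fun p =>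
    ⟨fun h => ?_, fun h => ?_⟩ <;> by_contra! h'
  · nlinarith [mul_le_mul_of_nonneg_left h (by positivity : (0 : ℤ) ≤ n),
      mul_le_mul_of_nonneg_left h' (by positivity : (0 : ℤ) ≤ μ * n + n')]
  · nlinarith [mul_le_mul_of_nonneg_left h (by positivity : (0 : ℤ) ≤ μ * n + n'),
      mul_le_mul_of_nonneg_left h' (by positivity : (0 : ℤ) ≤ n)]

theorem floorLine_mediant_tail_of_det_neg (hn : 0 < n) (hn' : 0 < n')
    (hdet : k' * n = k * n' + 1) {y : ℕ} (hy : y ≤ n') :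
    floorLine (μ * k + k') (μ * n + n') ((μ * k + k' : ℕ) - 1) (μ * n + y) =
      floorLine k' n' (k' - 1) y + μ * k := by
  have hdet : (k' * n : ℤ) = k * n' + 1 := by exact_mod_cast hdet
  unfold floorLine
  push_cast
  rw [← Int.add_mul_ediv_right _ _ (by positivity)]
  refine Int.ediv_eq_ediv_of_forall_mul_le_iff (by positivity) (by positivity) fun p =>
    ⟨fun h => ?_, fun h => ?_⟩ <;> by_contra! h'
  · have : p * n ≤ k * (y + 1) + μ * k * n := by nlinarith
    nlinarith [mul_le_mul_of_nonneg_left this (by positivity : (0 : ℤ) ≤ n'),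
      mul_le_mul_of_nonneg_left h' (by positivity : (0 : ℤ) ≤ n)]
  · nlinarith [mul_le_mul_of_nonneg_left h (by positivity : (0 : ℤ) ≤ μ * n + n'),
      mul_le_mul_of_nonneg_left h' (by positivity : (0 : ℤ) ≤ n'),
      mul_nonneg (Int.natCast_nonneg μ) (sub_nonneg.2 (by exact_mod_cast hy : (y : ℤ) ≤ n')),
      mul_nonneg (Int.natCast_nonneg μ) (sub_nonneg.2 (by exact_mod_cast hn : (1 : ℤ) ≤ n))]

end mediant

def cfNumDen : List ℕ → ℕ × ℕ
  | [] => (1, 0)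
  | a :: l => (a * (cfNumDen l).1 + (cfNumDen l).2, (cfNumDen l).1)

theorem cfNumDen_succ_cons (a : ℕ) (l : List ℕ) :
    cfNumDen ((a + 1) :: l) =
      ((cfNumDen (a :: l)).1 + (cfNumDen (a :: l)).2, (cfNumDen (a :: l)).2) := by
  simp only [cfNumDen]
  ring_nf

theorem cfNumDen_fst_pos {l : List ℕ} (hpos : ∀ a ∈ l, 1 ≤ a) : 0 < (cfNumDen l).1 := by
  induction l with
  | nil => exact one_pos
  | cons a l ih =>
    have := ih fun b hb => hpos b (List.mem_cons_of_mem a hb)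
    have := hpos a List.mem_cons_self
    simp only [cfNumDen]
    positivity

theorem coprime_cfNumDen (l : List ℕ) : Nat.Coprime (cfNumDen l).1 (cfNumDen l).2 := by
  induction l with
  | nil => exact Nat.coprime_one_left 0
  | cons a l ih => exact (Nat.coprime_mul_right_add_left _ _ _).2 ih.symm

theorem cfVal_eq_cfNumDen {l : List ℕ} (hpos : ∀ a ∈ l, 1 ≤ a) :
    cfVal l = (cfNumDen l).1 / (cfNumDen l).2 := by
  induction l with
  | nil => simp [cfVal, cfNumDen]
  | cons a l ih =>
    have hl : ∀ b ∈ l, 1 ≤ b := fun b hb => hpos b (List.mem_cons_of_mem a hb)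
    have : ((cfNumDen l).1 : ℚ) ≠ 0 := by exact_mod_cast (cfNumDen_fst_pos hl).ne'
    rw [cfVal, ih hl, inv_div, cfNumDen]
    push_cast
    field_simp

theorem cfNumDen_eq_of_cfVal_eq {l : List ℕ} {n k : ℕ} (hne : l ≠ [])
    (hpos : ∀ a ∈ l, 1 ≤ a) (hk : 0 < k) (hcop : Nat.Coprime n k) (h : cfVal l = n / k) :
    cfNumDen l = (n, k) := by
  obtain ⟨a, l, rfl⟩ := List.exists_cons_of_ne_nil hne
  rw [cfVal_eq_cfNumDen hpos] at h
  have hden : 0 < (cfNumDen (a :: l)).2 :=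
    cfNumDen_fst_pos fun b hb => hpos b (List.mem_cons_of_mem a hb)
  obtain ⟨h₁, h₂⟩ := Rat.div_int_inj (a := (cfNumDen (a :: l)).1)
    (b := (cfNumDen (a :: l)).2) (c := n) (d := k) (by exact_mod_cast hden)
    (by exact_mod_cast hk) (by simpa using coprime_cfNumDen _) (by simpa using hcop)
    (by simpa only [Int.cast_natCast] using h)
  exact Prod.ext (by exact_mod_cast h₁) (by exact_mod_cast h₂)

def PhasePair (u v : List ℤ) (k' n' k n : ℕ) : Prop :=
  0 < n' ∧ 0 < n ∧
    (k * n' = k' * n + 1 ∧ u = phaseWord k' n' k' ∧ v = phaseWord k n (k - 1) ∨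
      k' * n = k * n' + 1 ∧ u = phaseWord k' n' (k' - 1) ∧ v = phaseWord k n k)

def smithStep (p : List ℤ × List ℤ) (μ : ℕ) : List ℤ × List ℤ :=
  (p.2, (List.replicate μ p.2).flatten ++ p.1)

-- `S₁ = S₀^(μ₁ - 1) S₋₁` with `S₋₁ = [1]` and `S₀ = [0]`.
theorem smithWord_succ_cons (a : ℕ) (l : List ℕ) :
    smithWord ((a + 1) :: l) = ((a :: l).foldl smithStep ([1], [0])).2 := by
  simp only [smithWord, List.foldl_cons, smithStep, List.flatten_replicate_singleton,
    add_tsub_cancel_right]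
  rfl

namespace PhasePair

variable {u v : List ℤ} {k' n' k n : ℕ}

theorem init : PhasePair [1] [0] 1 1 0 1 :=
  ⟨one_pos, one_pos, Or.inr ⟨rfl, by decide, by decide⟩⟩

theorem exists_eq_phaseWord (h : PhasePair u v k' n' k n) : ∃ c, v = phaseWord k n c := by
  obtain ⟨-, -, ⟨-, -, hv⟩ | ⟨-, -, hv⟩⟩ := h <;> exact ⟨_, hv⟩

theorem step (h : PhasePair u v k' n' k n) (μ : ℕ) :
    PhasePair v ((List.replicate μ v).flatten ++ u) k n (μ * k + k') (μ * n + n') := by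
  obtain ⟨hn', hn, ⟨hdet, rfl, rfl⟩ | ⟨hdet, rfl, rfl⟩⟩ := h
  · refine ⟨hn, by positivity, Or.inr ⟨by rw [Nat.mul_add, hdet]; ring, rfl, ?_⟩⟩
    exact (diffWord_mul_add
      (fun m hm y hy => floorLine_mediant_copy_of_det_pos hn hn' hdet hm hy)
      fun y hy => floorLine_mediant_tail_of_det_pos hn hn' hdet hy).symm
  · refine ⟨hn, by positivity, Or.inl ⟨by rw [Nat.add_mul, hdet]; ring, rfl, ?_⟩⟩
    exact (diffWord_mul_add
      (fun m hm y hy => floorLine_mediant_copy_of_det_neg hn hn' hdet hm hy)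
      fun y hy => floorLine_mediant_tail_of_det_neg hn hn' hdet hy).symm

theorem foldl_smithStep (l : List ℕ) (h : PhasePair u v k' n' k n) :
    ∃ k'' n'', PhasePair (l.foldl smithStep (u, v)).1 (l.foldl smithStep (u, v)).2 k'' n''
      ((cfNumDen l).1 * k + (cfNumDen l).2 * k') ((cfNumDen l).1 * n + (cfNumDen l).2 * n') := by
  induction l generalizing u v k' n' k n with
  | nil => exact ⟨k', n', by simpa [cfNumDen] using h⟩
  | cons a l ih =>
    obtain ⟨k'', n'', h'⟩ := ih (h.step a)
    refine ⟨k'', n'', ?_⟩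
    convert h' using 1 <;> simp only [List.foldl_cons, smithStep, cfNumDen] <;> ring

end PhasePair

theorem exists_smithWord_eq_phaseWord {l : List ℕ} (hne : l ≠ [])
    (hpos : ∀ a ∈ l, 1 ≤ a) :
    ∃ c, smithWord l = phaseWord (cfNumDen l).2 (cfNumDen l).1 c := by
  obtain ⟨μ₁, l, rfl⟩ := List.exists_cons_of_ne_nil hne
  obtain ⟨a, rfl⟩ : ∃ a, μ₁ = a + 1 :=
    ⟨μ₁ - 1, by have := hpos μ₁ List.mem_cons_self; omega⟩
  obtain ⟨_, _, h⟩ := PhasePair.init.foldl_smithStep (a :: l)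
  rw [smithWord_succ_cons, cfNumDen_succ_cons]
  simpa using h.exists_eq_phaseWord

theorem smithWord_rotation_of_mechanical_general (n k : ℕ) (hk : 1 ≤ k) (hkn : k < n)
    (hcop : Nat.Coprime n k) (μ : List ℕ) (hne : μ ≠ [])
    (hpos : ∀ a ∈ μ, 1 ≤ a)
    (hval : cfVal μ = (n : ℚ) / k) :
    ∃ r : ℕ, ∀ j < n,
      (smithWord μ)[(j + r) % n]? = some (mechanicalWord ((k : ℝ) / n) j) := by
  have hn : 0 < n := (Nat.zero_lt_one.trans_le hk).trans hkn
  obtain ⟨c, hc⟩ := exists_smithWord_eq_phaseWord hne hpos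
  rw [cfNumDen_eq_of_cfVal_eq hne hpos hk hcop hval] at hc
  obtain ⟨r, hr⟩ := phaseWord_rotate hn hcop.symm c (n - 1)
  exact ⟨r, fun j hj => by rw [hc, hr j hj, mechanicalWord_natCast_div hn]⟩

/-- For coprime `n > k ≥ 1` with continued fraction expansion `n/k = [μ₁, …, μ_t]`,
the Smith word built from `[μ₁ - 1, μ₂, …, μ_t]` is a cyclic rotation of the period
word (first `n` letters) of the mechanical word of slope `k / n`. -/
theorem smithWord_rotation_of_mechanical (n k : ℕ) (hk : 1 ≤ k) (hkn : k < n)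
    (hcop : Nat.Coprime n k) (μ : List ℕ) (hne : μ ≠ [])
    (hpos : ∀ a ∈ μ, 1 ≤ a) (hcanon : μ.length = 1 ∨ μ.getLast! ≠ 1)
    (hval : cfVal μ = (n : ℚ) / k) :
    ∃ r : ℕ, ∀ j < n,
      (smithWord μ)[(j + r) % n]? = some (mechanicalWord ((k : ℝ) / n) j) :=
  smithWord_rotation_of_mechanical_general n k hk hkn hcop μ hne hpos hval
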